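/- arXiv:2001.11281 — 6 statements merged into one kernel-verified Lean document; each statement's English description precedes it below -/
import Mathlib

section
/- There exists a compact metrizable space X such that every continuum (nonempty compact connected metrizable space) is homeomorphic to at least one connected component of X. -/
/-!
Let `g` be a continuous surjection from the Cantor space onto the hyperspace of nonempty
compact subsets of the Hilbert cube `Q` (Hausdorff–Alexandroff: that hyperspace is compact
metrizable), and let `X = {(t, x) | x ∈ g t}`, a closed subset of `(ℕ → Bool) × Q`. Since the
Cantor space is totally disconnected, a component of `X` lies in one fibre `{t} × g t`, hence is
that fibre when `g t` is connected. Every continuum embeds in `Q`, so it is some `g t`.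
-/

open TopologicalSpace

/-- There exists a compact metrizable space `X` such that every continuum
(nonempty compact connected metrizable space) is homeomorphic to at least one
connected component of `X`. (Stated as a `Prop`-valued inductive to existentially
quantify over a type together with its topology.) -/
inductive ExistsUniversalComponentSpace : Prop where
  | intro (X : Type) [tX : TopologicalSpace X]
      (hcomp : CompactSpace X) (hmetr : MetrizableSpace X)
      (huniv : ∀ (C : Type) [TopologicalSpace C] [CompactSpace C] [ConnectedSpace C]
        [MetrizableSpace C], ∃ x : X, Nonempty (C ≃ₜ connectedComponent x)) :
      ExistsUniversalComponentSpace

open Topology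

namespace TopologicalSpace.NonemptyCompacts

theorem isClosed_setOf_mem {α : Type*} [TopologicalSpace α] [T2Space α] :
    IsClosed {p : NonemptyCompacts α × α | p.2 ∈ p.1} := by
  have h := isOpen_setOfPred_disjoint_coe.isClosed_compl.preimage
    (continuous_fst.prodMk (continuous_singleton.comp continuous_snd) :
      Continuous fun p : NonemptyCompacts α × α => (p.1, ({p.2} : NonemptyCompacts α)))
  simpa [Set.preimage, Set.disjoint_singleton_right] using h

theorem exists_nat_bool_continuous_surjective (α : Type*) [TopologicalSpace α] [CompactSpace α]
    [MetrizableSpace α] [Nonempty α] :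
    ∃ g : (ℕ → Bool) → NonemptyCompacts α, Continuous g ∧ Function.Surjective g := by
  let := metrizableSpaceMetric (NonemptyCompacts α)
  exact exists_nat_bool_continuous_surjective_of_compact _

end TopologicalSpace.NonemptyCompacts

open NonemptyCompacts

section SetValuedGraph

variable {T Q : Type*} [TopologicalSpace T] [TopologicalSpace Q]

def setValuedGraph (g : T → NonemptyCompacts Q) : Set (T × Q) := {p | p.2 ∈ g p.1}

theorem isClosed_setValuedGraph [T2Space Q] {g : T → NonemptyCompacts Q} (hg : Continuous g) :
    IsClosed (setValuedGraph g) :=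
  isClosed_setOf_mem.preimage (hg.prodMap continuous_id)

theorem connectedComponent_setValuedGraph [TotallyDisconnectedSpace T]
    {g : T → NonemptyCompacts Q} {p : setValuedGraph g} (hp : IsPreconnected (g p.1.1 : Set Q)) :
    connectedComponent p = {q | q.1.1 = p.1.1} := by
  apply Set.Subset.antisymm
  · intro q hq
    have hproj : Continuous fun q : setValuedGraph g => q.1.1 := by fun_prop
    have himage : (fun q : setValuedGraph g => q.1.1) '' connectedComponent p ⊆
        connectedComponent p.1.1 :=
      (isPreconnected_connectedComponent.image _ hproj.continuousOn).subset_connectedComponent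
        ⟨p, mem_connectedComponent, rfl⟩
    simpa using himage ⟨q, hq, rfl⟩
  · rintro q (hq : q.1.1 = p.1.1)
    let s : g p.1.1 → setValuedGraph g := fun y => ⟨(p.1.1, y), y.2⟩
    have : PreconnectedSpace (g p.1.1) := Subtype.preconnectedSpace hp
    have hrange : Set.range s ⊆ connectedComponent p :=
      (isPreconnected_range (by fun_prop)).subset_connectedComponent ⟨⟨p.1.2, p.2⟩, rfl⟩
    exact hrange ⟨⟨q.1.2, hq ▸ q.2⟩, Subtype.ext (Prod.ext hq.symm rfl)⟩

theorem exists_homeomorph_connectedComponent_setValuedGraph [TotallyDisconnectedSpace T]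
    {g : T → NonemptyCompacts Q} {C : Type*} [TopologicalSpace C] [ConnectedSpace C] {e : C → Q}
    (he : IsEmbedding e) {t : T} (ht : (g t : Set Q) = Set.range e) :
    ∃ p : setValuedGraph g, Nonempty (C ≃ₜ connectedComponent p) := by
  let ψ : C → setValuedGraph g :=
    fun a => ⟨(t, e a), show e a ∈ (g t : Set Q) from ht ▸ Set.mem_range_self a⟩
  have hsnd : Continuous fun q : setValuedGraph g => q.1.2 := by fun_prop
  have hψ : IsEmbedding ψ := IsEmbedding.of_comp (by fun_prop) hsnd he
  obtain ⟨a⟩ := ‹ConnectedSpace C›.toNonempty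
  have hrange : Set.range ψ = connectedComponent (ψ a) := by
    have hpre : IsPreconnected (g t : Set Q) := ht ▸ isPreconnected_range he.continuous
    rw [connectedComponent_setValuedGraph hpre]
    ext q
    constructor
    · rintro ⟨b, rfl⟩
      rfl
    · intro (hq : q.1.1 = t)
      obtain ⟨b, hb⟩ : q.1.2 ∈ Set.range e := ht ▸ hq ▸ q.2
      exact ⟨b, Subtype.ext (Prod.ext hq.symm hb)⟩
  exact ⟨ψ a, ⟨hψ.toHomeomorph.trans (Homeomorph.setCongr hrange)⟩⟩

end SetValuedGraph

theorem stmt_0 : ExistsUniversalComponentSpace := by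
  obtain ⟨g, hg, hg_surj⟩ := exists_nat_bool_continuous_surjective (ℕ → unitInterval)
  have : CompactSpace (setValuedGraph g) :=
    isCompact_iff_compactSpace.1 (isClosed_setValuedGraph hg).isCompact
  refine ⟨setValuedGraph g, inferInstance, inferInstance, fun C _ _ _ _ => ?_⟩
  let := metrizableSpaceMetric C
  obtain ⟨e, he⟩ := Metric.PiNatEmbed.exists_embedding_to_hilbert_cube (X := C)
  obtain ⟨t, ht⟩ :=
    hg_surj ⟨⟨Set.range e, isCompact_range he.continuous⟩, Set.range_nonempty e⟩
  exact exists_homeomorph_connectedComponent_setValuedGraph he (congrArg SetLike.coe ht)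
end

section
/- If π : X → Y is a closed continuous surjection between Polish spaces with compact fibers (a perfect map), then the set R = {π⁻¹(y) : y ∈ Y} of fibers is a Gδ subset of the hyperspace K(X). -/
/-!
A nonempty compact set `K` is a fiber of `π` exactly when `π` is constant on `K` and `K` is
saturated, `π⁻¹(π K) ⊆ K`. Constancy is a closed condition in the Vietoris topology. Saturation
is the countable intersection of the conditions `π⁻¹(π K) ⊆ thickening (1/(n+1)) K`, and each of
these is open: `π⁻¹(π K)` is compact because `π` is proper, so it lies in a strictly thinner
`δ`-thickening of `K`, and because `π` is closed the saturation of every set close enough to `K`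
stays inside that `δ`-thickening.
-/

open TopologicalSpace Metric Set Topology

theorem setOf_exists_eq_preimage_singleton {X Y : Type*} [TopologicalSpace X] (π : X → Y) :
    {K : NonemptyCompacts X | ∃ y, (K : Set X) = π ⁻¹' {y}} =
      {K : NonemptyCompacts X | (π '' K).Subsingleton} ∩ {K | π ⁻¹' (π '' K) ⊆ K} := by
  ext K
  constructor
  · rintro ⟨y, hK⟩
    have hKy : π '' K ⊆ {y} := hK ▸ image_preimage_subset π {y}
    exact ⟨subsingleton_singleton.anti hKy, (preimage_mono hKy).trans hK.ge⟩
  · rintro ⟨hsub : (π '' K).Subsingleton, hsat : π ⁻¹' (π '' K) ⊆ K⟩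
    obtain ⟨x, hx⟩ := K.nonempty
    refine ⟨π x, ?_⟩
    rw [← hsub.eq_singleton_of_mem (mem_image_of_mem π hx)]
    exact (subset_preimage_image π K).antisymm hsat

theorem isClosed_setOf_image_subsingleton {X Y : Type*} [TopologicalSpace X] [TopologicalSpace Y]
    [T2Space Y] {π : X → Y} (hπ : Continuous π) :
    IsClosed {K : NonemptyCompacts X | (π '' K).Subsingleton} := by
  refine isOpen_compl_iff.1 <| isOpen_iff_forall_mem_open.2 fun K hK => ?_
  obtain ⟨_, ⟨x, hx, rfl⟩, _, ⟨x', hx', rfl⟩, hne⟩ := not_subsingleton_iff.1 hK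
  obtain ⟨U, U', hU, hU', hxU, hx'U', hUU'⟩ := t2_separation hne
  refine ⟨{L | ((L : Set X) ∩ π ⁻¹' U).Nonempty} ∩ {L | ((L : Set X) ∩ π ⁻¹' U').Nonempty},
    ?_,
    (NonemptyCompacts.isOpen_inter_nonempty_of_isOpen (hU.preimage hπ)).inter
      (NonemptyCompacts.isOpen_inter_nonempty_of_isOpen (hU'.preimage hπ)),
    ⟨x, hx, hxU⟩, ⟨x', hx', hx'U'⟩⟩
  rintro L ⟨⟨z, hzL, hzU⟩, ⟨z', hz'L, hz'U'⟩⟩ hL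
  exact hUU'.ne_of_mem hzU hz'U' (hL (mem_image_of_mem π hzL) (mem_image_of_mem π hz'L))

section PseudoMetric

variable {X Y : Type*} [PseudoMetricSpace X] [TopologicalSpace Y] {π : X → Y}

theorem iInter_thickening_one_div_eq_closure (E : Set X) :
    ⋂ n : ℕ, thickening (1 / ((n : ℝ) + 1)) E = closure E := by
  rw [closure_eq_iInter_thickening' E (range fun n : ℕ => 1 / ((n : ℝ) + 1)), biInter_range]
  · rintro _ ⟨n, rfl⟩
    exact mem_Ioi.2 Nat.one_div_pos_of_nat
  · intro ε hε
    obtain ⟨n, hn⟩ := exists_nat_one_div_lt (K := ℝ) hε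
    exact ⟨_, ⟨n, rfl⟩, Nat.one_div_pos_of_nat, hn.le⟩

theorem IsCompact.exists_lt_subset_thickening {S E : Set X} {ε : ℝ} (hS : IsCompact S)
    (hE : E.Nonempty) (h : S ⊆ thickening ε E) : ∃ δ < ε, S ⊆ thickening δ E := by
  rcases S.eq_empty_or_nonempty with rfl | hSne
  · exact ⟨ε - 1, by linarith, empty_subset _⟩
  obtain ⟨z, hzS, hzmax⟩ := hS.exists_isMaxOn hSne (continuous_infDist_pt E).continuousOn
  obtain ⟨δ, hzδ, hδε⟩ := exists_between ((mem_thickening_iff_infDist_lt hE).1 (h hzS))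
  exact ⟨δ, hδε, fun _ hx => (mem_thickening_iff_infDist_lt hE).2 ((hzmax hx).trans_lt hzδ)⟩

theorem IsClosedMap.exists_preimage_image_thickening_subset (hπ : IsClosedMap π)
    (hπc : Continuous π) {K U : Set X} (hK : IsCompact K)
    (hU : U ∈ 𝓝ˢ (π ⁻¹' (π '' K))) :
    ∃ r > 0, π ⁻¹' (π '' thickening r K) ⊆ U := by
  rw [← hπ.comap_nhdsSet_eq hπc] at hU
  obtain ⟨V, hV, hVU⟩ := hU
  obtain ⟨r, hr, hrV⟩ := (hasBasis_nhdsSet_thickening hK).mem_iff.1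
    (hπc.tendsto_nhdsSet (mapsTo_image π K) hV)
  exact ⟨r, hr, (preimage_mono (image_subset_iff.2 hrV)).trans hVU⟩

end PseudoMetric

section Metric

variable {X Y : Type*} [MetricSpace X] [TopologicalSpace Y] {π : X → Y}

theorem NonemptyCompacts.subset_thickening_of_dist_lt {K L : NonemptyCompacts X} {r : ℝ}
    (h : dist K L < r) : (K : Set X) ⊆ thickening r L := fun _ hx =>
  (mem_thickening_iff_infDist_lt L.nonempty).2 <|
    (infDist_le_hausdorffDist_of_mem hx (edist_ne_top K L)).trans_lt h

theorem isOpen_setOf_preimage_image_subset_thickening (hπ : IsProperMap π) (ε : ℝ) :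
    IsOpen {K : NonemptyCompacts X | π ⁻¹' (π '' K) ⊆ thickening ε K} := by
  refine Metric.isOpen_iff.2 fun K (hK : π ⁻¹' (π '' K) ⊆ thickening ε K) => ?_
  obtain ⟨δ, hδε, hδ⟩ := (hπ.isCompact_preimage (K.isCompact.image hπ.continuous)
    ).exists_lt_subset_thickening K.nonempty hK
  obtain ⟨r, hr, hrδ⟩ := hπ.isClosedMap.exists_preimage_image_thickening_subset hπ.continuous
    K.isCompact (isOpen_thickening.mem_nhdsSet.2 hδ)
  refine ⟨min r (ε - δ), lt_min hr (sub_pos.2 hδε), fun L hL => ?_⟩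
  have hLK : (L : Set X) ⊆ thickening r K :=
    NonemptyCompacts.subset_thickening_of_dist_lt (hL.trans_le (min_le_left _ _))
  have hKL : (K : Set X) ⊆ thickening (ε - δ) L := NonemptyCompacts.subset_thickening_of_dist_lt
    ((dist_comm K L).trans_lt (hL.trans_le (min_le_right _ _)))
  calc π ⁻¹' (π '' L) ⊆ π ⁻¹' (π '' thickening r K) := preimage_mono (image_mono hLK)
    _ ⊆ thickening δ K := hrδ
    _ ⊆ thickening δ (thickening (ε - δ) L) := thickening_subset_of_subset δ hKL
    _ ⊆ thickening (δ + (ε - δ)) L := thickening_thickening_subset _ _ _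
    _ = thickening ε L := by rw [add_sub_cancel]

theorem isGδ_setOf_preimage_image_subset (hπ : IsProperMap π) :
    IsGδ {K : NonemptyCompacts X | π ⁻¹' (π '' K) ⊆ K} := by
  have : {K : NonemptyCompacts X | π ⁻¹' (π '' K) ⊆ K} =
      ⋂ n : ℕ,
        {K : NonemptyCompacts X | π ⁻¹' (π '' K) ⊆ thickening (1 / ((n : ℝ) + 1)) K} := by
    ext K
    simp only [mem_ofPred_eq, mem_iInter, ← subset_iInter_iff,
      iInter_thickening_one_div_eq_closure, K.isCompact.isClosed.closure_eq]
  rw [this]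
  exact .iInter fun n => (isOpen_setOf_preimage_image_subset_thickening hπ _).isGδ

end Metric

theorem stmt_4_general {X Y : Type*} [MetricSpace X]
    [TopologicalSpace Y] [PolishSpace Y]
    (π : X → Y) (hcont : Continuous π) (hclosed : IsClosedMap π)
    (hfib : ∀ y : Y, IsCompact (π ⁻¹' {y})) :
    IsGδ {K : NonemptyCompacts X | ∃ y : Y, (K : Set X) = π ⁻¹' {y}} := by
  have hπ : IsProperMap π :=
    isProperMap_iff_isClosedMap_and_compact_fibers.2 ⟨hcont, hclosed, hfib⟩
  rw [setOf_exists_eq_preimage_singleton]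
  exact (isClosed_setOf_image_subsingleton hcont).isGδ.inter
    (isGδ_setOf_preimage_image_subset hπ)

/-- If `π : X → Y` is a perfect map (closed continuous surjection with compact fibers)
between Polish spaces, then the set of fibers `R = {π⁻¹(y) : y ∈ Y}` is a Gδ subset of
the hyperspace `K(X)`. -/
theorem stmt_4 {X Y : Type*} [MetricSpace X] [PolishSpace X]
    [TopologicalSpace Y] [PolishSpace Y]
    (π : X → Y) (hcont : Continuous π) (hclosed : IsClosedMap π)
    (hsurj : Function.Surjective π) (hfib : ∀ y : Y, IsCompact (π ⁻¹' {y})) :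
    IsGδ {K : NonemptyCompacts X | ∃ y : Y, (K : Set X) = π ⁻¹' {y}} :=
  stmt_4_general π hcont hclosed hfib
end

section
/- The equivalence relation E₀ of eventual equality on the Cantor space 2^ℕ is not smooth, i.e. there is no Borel measurable map φ from 2^ℕ to a Polish space Z such that x E₀ y if and only if φ(x) = φ(y). -/
/-!
An `E₀`-invariant Borel set is a tail event, so by Kolmogorov's 0-1 law it is null or conull
for the fair coin-tossing measure on `2^ℕ`. A Borel reduction `φ` of `E₀` to a Polish, hence
countably separated, space would therefore be a.e. constant, making a single `E₀`-class conull.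
But every `E₀`-class is a countable union of the sets `{y | ∀ n ≥ m, y n = x n}`, each of
measure at most `2⁻ᵏ` for every `k`.
-/

/-- The relation `E₀` of eventual equality on the Cantor space `2^ℕ`. -/
def E0 (a b : ℕ → Bool) : Prop := ∃ m : ℕ, ∀ n ≥ m, a n = b n

/-- An equivalence relation is smooth if it is Borel reducible to the equality
relation on some Polish space. -/
inductive SmoothRel {X : Type*} [TopologicalSpace X] [MeasurableSpace X]
    (E : X → X → Prop) : Prop where
  | intro (Z : Type) [tZ : TopologicalSpace Z] [mZ : MeasurableSpace Z]
      (borelZ : BorelSpace Z) (polishZ : PolishSpace Z) (φ : X → Z)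
      (meas : Measurable φ) (reduces : ∀ a b : X, (E a b ↔ φ a = φ b)) : SmoothRel E

open MeasureTheory ProbabilityTheory Filter Set
open scoped ENNReal

section TailInvariant

variable {X : ℕ → Type*} [∀ n, MeasurableSpace (X n)]

theorem measurableSet_limsup_comap_eval_of_tail_invariant [∀ n, Nonempty (X n)]
    {A : Set (∀ n, X n)} (hA : MeasurableSet A)
    (hinv : ∀ x y, (∀ᶠ n in atTop, x n = y n) → (x ∈ A ↔ y ∈ A)) :
    MeasurableSet[limsup (fun n ↦ MeasurableSpace.comap (fun x : ∀ n, X n ↦ x n) inferInstance)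
      atTop] A := by
  rw [limsup_eq_iInf_iSup_of_nat, MeasurableSpace.measurableSet_iInf]
  intro m
  -- `A` is the preimage of itself under resetting the first `m` coordinates, a map that reads
  -- only the coordinates `≥ m`.
  let 𝓕 : MeasurableSpace (∀ n, X n) :=
    ⨆ i ≥ m, MeasurableSpace.comap (fun x : ∀ n, X n ↦ x i) inferInstance
  let reset : (∀ n, X n) → ∀ n, X n := fun x n ↦ if n < m then Classical.arbitrary _ else x n
  have hreset : Measurable[𝓕, MeasurableSpace.pi] reset := by
    refine @measurable_pi_lambda (∀ n, X n) ℕ X 𝓕 _ _ fun n ↦ ?_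
    by_cases hn : n < m
    · simp only [reset, hn, if_true]
      exact measurable_const
    · simp only [reset, hn, if_false]
      exact (comap_measurable _).mono (le_iSup₂_of_le n (not_lt.1 hn) le_rfl) le_rfl
  have hA_eq : reset ⁻¹' A = A := by
    ext x
    refine hinv _ _ (eventually_atTop.2 ⟨m, fun n hn ↦ ?_⟩)
    simp [reset, not_lt.2 hn]
  rw [← hA_eq]
  exact hreset hA

variable (P : ∀ n, Measure (X n)) [∀ n, IsProbabilityMeasure (P n)]

theorem infinitePi_eq_zero_or_one_of_tail_invariant {A : Set (∀ n, X n)} (hA : MeasurableSet A)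
    (hinv : ∀ x y, (∀ᶠ n in atTop, x n = y n) → (x ∈ A ↔ y ∈ A)) :
    Measure.infinitePi P A = 0 ∨ Measure.infinitePi P A = 1 := by
  have := fun n ↦ nonempty_of_isProbabilityMeasure (P n)
  have hindep : iIndep (fun n ↦ MeasurableSpace.comap (fun x : ∀ n, X n ↦ x n) inferInstance)
      (Measure.infinitePi P) :=
    (iIndepFun_iff_iIndep _ _ _).1 (iIndepFun_infinitePi (X := fun _ ↦ id) fun _ ↦ measurable_id)
  exact measure_zero_or_one_of_measurableSet_limsup_atTop
    (fun n ↦ (measurable_pi_apply n).comap_le) hindep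
    (measurableSet_limsup_comap_eval_of_tail_invariant hA hinv)

theorem exists_ae_eq_const_of_tail_invariant {Z : Type*} [MeasurableSpace Z]
    [MeasurableSpace.CountablySeparated Z] {g : (∀ n, X n) → Z} (hg : Measurable g)
    (hinv : ∀ x y, (∀ᶠ n in atTop, x n = y n) → g x = g y) :
    ∃ z, g =ᵐ[Measure.infinitePi P] Function.const _ z := by
  have : Nonempty Z := ⟨g (nonempty_of_isProbabilityMeasure (Measure.infinitePi P)).some⟩
  refine exists_eventuallyEq_const_of_forall_separating MeasurableSet fun U hU ↦ ?_
  rcases infinitePi_eq_zero_or_one_of_tail_invariant P (hg hU)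
    (fun x y hxy ↦ by rw [mem_preimage, mem_preimage, hinv x y hxy]) with h | h
  · exact Or.inr (measure_eq_zero_iff_ae_notMem.1 h)
  · exact Or.inl ((mem_ae_iff_prob_eq_one (hg hU)).2 h)

theorem infinitePi_setOf_eventually_eq_eq_zero [∀ n, MeasurableSingletonClass (X n)] {c : ℝ≥0∞}
    (hc : c < 1) (hP : ∀ n a, P n {a} ≤ c) (x : ∀ n, X n) :
    Measure.infinitePi P {y | ∀ᶠ n in atTop, y n = x n} = 0 := by
  simp only [eventually_atTop, ofPred_exists]
  refine measure_iUnion_null fun m ↦ le_antisymm ?_ zero_le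
  refine ge_of_tendsto' (ENNReal.tendsto_pow_atTop_nhds_zero_of_lt_one hc) fun k ↦ ?_
  calc Measure.infinitePi P {y | ∀ n ≥ m, y n = x n}
      ≤ Measure.infinitePi P ((Finset.Ico m (m + k) : Set ℕ).pi fun n ↦ {x n}) :=
        measure_mono fun y hy n hn ↦ hy n (Finset.mem_Ico.1 hn).1
    _ = ∏ n ∈ Finset.Ico m (m + k), P n {x n} :=
        Measure.infinitePi_pi P fun _ _ ↦ measurableSet_singleton _
    _ ≤ c ^ k :=
        (Finset.prod_le_pow_card _ _ _ fun n _ ↦ hP n (x n)).trans_eq (by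
          rw [Nat.card_Ico, Nat.add_sub_cancel_left])

end TailInvariant

/-- The equivalence relation `E₀` of eventual equality on `2^ℕ` is not smooth: there is
no Borel measurable map `φ` from `2^ℕ` to a Polish space with `x E₀ y ↔ φ x = φ y`. -/
theorem stmt_10 : ¬ SmoothRel E0 := by
  rintro ⟨Z, _, _, φ, hφ, hred⟩
  let P : ℕ → Measure Bool := fun _ ↦ (PMF.uniformOfFintype Bool).toMeasure
  have hP : ∀ n a, P n {a} ≤ 2⁻¹ := fun n a ↦ by
    simp [P, PMF.uniformOfFintype_apply]
  have hE0 : ∀ a b, E0 a b ↔ ∀ᶠ n in atTop, a n = b n := fun a b ↦ eventually_atTop.symm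
  obtain ⟨z, hz⟩ := exists_ae_eq_const_of_tail_invariant P hφ fun a b hab ↦
    (hred a b).1 ((hE0 a b).2 hab)
  obtain ⟨a, ha⟩ := hz.exists
  have hclass : ∀ᵐ x ∂Measure.infinitePi P, ¬ ∀ᶠ n in atTop, x n = a n :=
    measure_eq_zero_iff_ae_notMem.1 (infinitePi_setOf_eventually_eq_eq_zero P (by norm_num) hP a)
  obtain ⟨x, hx, hxa⟩ := (hz.and hclass).exists
  exact hxa ((hE0 x a).1 ((hred x a).2 (hx.trans ha.symm)))
end

section
/- The homeomorphism relation H on the hyperspace K(Q) of compact subsets of the Hilbert cube, given by (K,L) ∈ H iff K is homeomorphic to L, is an analytic subset of K(Q) × K(Q). -/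
open TopologicalSpace

/-- The Hilbert cube `[0,1]^ℕ`. -/
abbrev HilbertCube : Type := ℕ → unitInterval

/-- A compatible metric on the Hilbert cube (inducing the product topology). -/
noncomputable instance : MetricSpace HilbertCube := PiCountable.metricSpace

/-!
Compacta `K` and `L` are homeomorphic exactly when some compact `G ⊆ Q × Q` projects onto `K`
and onto `L` with both projections injective on `G`: take the graph of a homeomorphism, and
conversely a continuous bijection from a compact space onto a Hausdorff one is a homeomorphism.
Injectivity of `f` on `G` says that `G × G` lies in the Gδ set `{(p, q) | f p = f q → p = q}`,
a Gδ condition on `G`. So `H` is a continuous image of a Gδ subset of the Polish space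
`K(Q × Q)`, hence analytic.
-/

open Set

theorem IsCompact.nonempty_homeomorph_image {X Y : Type*} [TopologicalSpace X]
    [TopologicalSpace Y] [T2Space Y] {s : Set X} (hs : IsCompact s) {f : X → Y}
    (hf : Continuous f) (hinj : InjOn f s) : Nonempty (s ≃ₜ f '' s) := by
  have : CompactSpace s := isCompact_iff_compactSpace.mp hs
  have h_emb := (hf.comp continuous_subtype_val).isClosedEmbedding hinj.injective
  exact ⟨h_emb.isEmbedding.toHomeomorph.trans (.setCongr (range_domRestrict f s))⟩

namespace TopologicalSpace.NonemptyCompacts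

variable {X Y : Type*} [TopologicalSpace X] [TopologicalSpace Y]

theorem isGδ_subsets_of_isGδ {s : Set X} (hs : IsGδ s) :
    IsGδ {K : NonemptyCompacts X | ↑K ⊆ s} := by
  obtain ⟨T, hT_open, hT_countable, rfl⟩ := hs
  simp only [subset_sInter_iff, ofPred_forall]
  exact .biInter_of_isOpen hT_countable fun t ht => isOpen_subsets_of_isOpen (hT_open t ht)

theorem isGδ_setOf_injOn [MetrizableSpace X] [T2Space Y] {f : X → Y} (hf : Continuous f) :
    IsGδ {K : NonemptyCompacts X | InjOn f K} := by
  have h_pairs : IsGδ {p : X × X | f p.1 = f p.2 → p.1 = p.2} := by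
    simp only [imp_iff_not_or, ofPred_or]
    exact (isClosed_eq (by fun_prop) (by fun_prop)).isOpen_compl.isGδ.union
      (isClosed_eq continuous_fst continuous_snd).isGδ
  have h_square : Continuous fun K : NonemptyCompacts X => K ×ˢ K :=
    continuous_prod.comp (continuous_id.prodMk continuous_id)
  convert (isGδ_subsets_of_isGδ h_pairs).preimage h_square using 1
  ext K
  simp [InjOn, prod_subset_iff]

theorem exists_graph_of_homeomorph {K : NonemptyCompacts X} {L : NonemptyCompacts Y}
    (e : K ≃ₜ L) :
    ∃ G : NonemptyCompacts (X × Y), G.map Prod.fst continuous_fst = K ∧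
      G.map Prod.snd continuous_snd = L ∧
      InjOn Prod.fst (G : Set (X × Y)) ∧ InjOn Prod.snd (G : Set (X × Y)) := by
  have : CompactSpace K := isCompact_iff_compactSpace.mp K.isCompact
  have : Nonempty K := K.nonempty.to_subtype
  let graph : K → X × Y := fun k => (k, e k)
  have h_graph : Continuous graph := by fun_prop
  refine ⟨⟨⟨range graph, isCompact_range h_graph⟩, range_nonempty graph⟩, ?_, ?_, ?_, ?_⟩
  · ext1
    exact (range_comp Prod.fst graph).symm.trans Subtype.range_coe
  · ext1
    exact (range_comp Prod.snd graph).symm.trans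
      ((e.surjective.range_comp Subtype.val).trans Subtype.range_coe)
  · rintro _ ⟨k, rfl⟩ _ ⟨k', rfl⟩ h
    rw [Subtype.ext h]
  · rintro _ ⟨k, rfl⟩ _ ⟨k', rfl⟩ h
    rw [e.injective (Subtype.ext h)]

theorem setOf_nonempty_homeomorph_eq_image [T2Space X] [T2Space Y] :
    {p : NonemptyCompacts X × NonemptyCompacts Y | Nonempty (↥(p.1 : Set X) ≃ₜ ↥(p.2 : Set Y))} =
      (fun G : NonemptyCompacts (X × Y) =>
          (G.map Prod.fst continuous_fst, G.map Prod.snd continuous_snd)) ''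
        {G | InjOn Prod.fst (G : Set (X × Y)) ∧ InjOn Prod.snd (G : Set (X × Y))} := by
  ext ⟨K, L⟩
  constructor
  · rintro ⟨e⟩
    obtain ⟨G, hK, hL, h_fst, h_snd⟩ := exists_graph_of_homeomorph e
    exact ⟨G, ⟨h_fst, h_snd⟩, Prod.ext hK hL⟩
  · rintro ⟨G, ⟨h_fst, h_snd⟩, h⟩
    cases h
    obtain ⟨e_fst⟩ := G.isCompact.nonempty_homeomorph_image continuous_fst h_fst
    obtain ⟨e_snd⟩ := G.isCompact.nonempty_homeomorph_image continuous_snd h_snd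
    exact ⟨e_fst.symm.trans e_snd⟩

end TopologicalSpace.NonemptyCompacts

/-- The homeomorphism relation `H` on the hyperspace `K(Q)` of nonempty compact subsets
of the Hilbert cube, `(K, L) ∈ H` iff `K` is homeomorphic to `L`, is an analytic subset
of `K(Q) × K(Q)`. -/
theorem stmt_12 :
    MeasureTheory.AnalyticSet
      {p : NonemptyCompacts HilbertCube × NonemptyCompacts HilbertCube |
        Nonempty (↥(p.1 : Set HilbertCube) ≃ₜ ↥(p.2 : Set HilbertCube))} := by
  rw [NonemptyCompacts.setOf_nonempty_homeomorph_eq_image]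
  borelize (NonemptyCompacts (HilbertCube × HilbertCube))
  have h_graphs := (NonemptyCompacts.isGδ_setOf_injOn (X := HilbertCube × HilbertCube)
    continuous_fst).inter (NonemptyCompacts.isGδ_setOf_injOn continuous_snd)
  exact h_graphs.measurableSet.analyticSet.image_of_continuous (by fun_prop)
end

section
/- Let K be a nondegenerate continuum in the Hilbert cube and let e, f : (0,1] → K be continuous compactifying maps. Then the compactification S_e = graph(e) ∪ ({0} × K) is homeomorphic to S_f if and only if there exist homeomorphisms α of K and β of (0,1] such that the distance d(α(e(t)), f(β(t))) tends to 0 as t → 0⁺. -/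
open TopologicalSpace Set Filter

/-- A map `g : (0,1] → K` is compactifying if `⋂_{ε>0} closure (g((0,ε))) = K`. -/
def Compactifying (K : Set HilbertCube) (g : Set.Ioc (0:ℝ) 1 → K) : Prop :=
  (⋂ ε ∈ Set.Ioi (0:ℝ),
    closure ((fun t : Set.Ioc (0:ℝ) 1 => (g t : HilbertCube)) '' {t | (t : ℝ) < ε})) = K

/-- The compactification `S_g = graph(g) ∪ ({0} × K)` of `(0,1]` associated to a
compactifying map `g : (0,1] → K`, as a subset of `ℝ × Q`. -/
def SpiralSet (K : Set HilbertCube) (g : Set.Ioc (0:ℝ) 1 → K) : Set (ℝ × HilbertCube) :=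
  (Set.range fun t : Set.Ioc (0:ℝ) 1 => ((t : ℝ), (g t : HilbertCube))) ∪ {0} ×ˢ K

/-!
The compactification `S_g` is connected im kleinen exactly at the points of the graph: near
a graph point it is a copy of `(0,1]`, while a connected neighbourhood of a remainder point
`(0,k)` that contains the graph point over `t` has a first projection containing `[0,t]`, so it
contains the whole arc of the graph over `(0,t]`, which comes close to every point of `K`.
Hence a homeomorphism `h : S_e ≃ₜ S_f` maps graph onto graph and remainder onto remainder,
which yields `β` and `α`. The continuous function `x ↦ d(α x₂, (h x)₂)` vanishes on the
remainder of the compact space `S_e`, so it tends to `0` along the graph as `t → 0⁺`, i.e.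
along the cocompact filter of `(0,1]`.

Conversely, `α` on the remainder and `β` on the graph glue to a bijection `S_e → S_f`; the
asymptotic condition is exactly continuity at the remainder, and compactness of `S_e` makes
the bijection a homeomorphism.
-/

open Topology

section General

variable {X Y A B : Type*} [TopologicalSpace X] [TopologicalSpace Y] [TopologicalSpace A]
  [TopologicalSpace B]

def ConnectedImKleinenAt (x : X) : Prop :=
  ∀ U ∈ 𝓝 x, ∃ V ∈ 𝓝 x, V ⊆ U ∧ IsPreconnected V

theorem connectedImKleinenAt [LocallyConnectedSpace X] (x : X) : ConnectedImKleinenAt x :=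
  fun _U hU ↦
    let ⟨V, ⟨hVo, hxV, hVc⟩, hVU⟩ :=
      (LocallyConnectedSpace.open_connected_basis x).mem_iff.1 hU
    ⟨V, hVo.mem_nhds hxV, hVU, hVc.isPreconnected⟩

theorem ConnectedImKleinenAt.map {γ : Y → X} {y : Y} (hy : ConnectedImKleinenAt y)
    (hγ : IsOpenEmbedding γ) : ConnectedImKleinenAt (γ y) := by
  intro U hU
  obtain ⟨V, hV, hVU, hVc⟩ :=
    hy (γ ⁻¹' U) (hγ.continuous.continuousAt.preimage_mem_nhds hU)
  refine ⟨γ '' V, ?_, image_subset_iff.2 hVU, hVc.image γ hγ.continuous.continuousOn⟩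
  rw [← hγ.map_nhds_eq]
  exact image_mem_map hV

theorem Homeomorph.connectedImKleinenAt_apply_iff (h : X ≃ₜ Y) {x : X} :
    ConnectedImKleinenAt (h x) ↔ ConnectedImKleinenAt x :=
  ⟨fun hx ↦ h.symm_apply_apply x ▸ hx.map h.symm.isOpenEmbedding,
    fun hx ↦ hx.map h.isOpenEmbedding⟩

theorem comap_nhds_le_cocompact [T2Space X] {γ : Y → X} (hγ : Continuous γ) {x : X}
    (hx : x ∉ range γ) : comap γ (𝓝 x) ≤ cocompact Y := by
  intro s hs
  obtain ⟨C, hC, hCs⟩ := mem_cocompact.1 hs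
  refine mem_comap.2 ⟨(γ '' C)ᶜ, (hC.image hγ).isClosed.isOpen_compl.mem_nhds ?_, ?_⟩
  · rintro ⟨c, -, rfl⟩
    exact hx ⟨c, rfl⟩
  · exact fun y hy ↦ hCs fun hyC ↦ hy ⟨y, hyC, rfl⟩

theorem Topology.IsOpenEmbedding.tendsto_cocompact_nhdsSet_compl_range [CompactSpace X]
    {γ : Y → X} (hγ : IsOpenEmbedding γ) :
    Tendsto γ (cocompact Y) (𝓝ˢ (range γ)ᶜ) := by
  intro s hs
  obtain ⟨U, hUo, hU, hUs⟩ := mem_nhdsSet_iff_exists.1 hs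
  have hUc : Uᶜ ⊆ range γ := compl_subset_comm.1 hU
  refine mem_cocompact.2 ⟨γ ⁻¹' Uᶜ, ?_, fun y hy ↦ hUs (not_not.1 hy)⟩
  exact (hγ.isInducing.isCompact_preimage_iff hUc).2 hUo.isClosed_compl.isCompact

noncomputable def Homeomorph.ofImageRangeEq (h : X ≃ₜ Y) {ι : A → X} {κ : B → Y}
    (hι : IsEmbedding ι) (hκ : IsEmbedding κ) (hrange : h '' range ι = range κ) :
    A ≃ₜ B :=
  hι.toHomeomorph.trans <| (h.image _).trans <| (Homeomorph.setCongr hrange).trans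
    hκ.toHomeomorph.symm

theorem Homeomorph.apply_ofImageRangeEq (h : X ≃ₜ Y) {ι : A → X} {κ : B → Y}
    (hι : IsEmbedding ι) (hκ : IsEmbedding κ) (hrange : h '' range ι = range κ) (a : A) :
    κ (h.ofImageRangeEq hι hκ hrange a) = h (ι a) := by
  rw [← hκ.toHomeomorph_apply_coe]
  exact congrArg Subtype.val (hκ.toHomeomorph.apply_symm_apply _)

end General

theorem comap_coe_nhdsGT_eq_cocompact (a b : ℝ) :
    comap ((↑) : Ioc a b → ℝ) (𝓝[>] a) = cocompact (Ioc a b) := by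
  refine le_antisymm
    ((comap_mono nhdsWithin_le_nhds).trans
      (comap_nhds_le_cocompact continuous_subtype_val fun ⟨t, ht⟩ ↦ t.2.1.ne' ht)) ?_
  rw [← tendsto_iff_comap]
  intro s hs
  obtain ⟨u, hu, hus⟩ := mem_nhdsGT_iff_exists_Ioo_subset.1 hs
  refine mem_cocompact.2 ⟨(↑) ⁻¹' Icc u b, ?_, fun t ht ↦ hus ⟨t.2.1, ?_⟩⟩
  · refine (IsInducing.subtypeVal.isCompact_preimage_iff ?_).2 isCompact_Icc
    exact fun r hr ↦ ⟨⟨r, lt_of_lt_of_le hu hr.1, hr.2⟩, rfl⟩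
  · exact not_le.1 fun htu ↦ ht ⟨htu, t.2.2⟩

local notation "I" => Set.Ioc (0 : ℝ) 1

theorem Compactifying.exists_lt_dist_lt {K : Set HilbertCube} {g : I → K}
    (hg : Compactifying K g) {k : HilbertCube} (hk : k ∈ K) {ε : ℝ} (hε : 0 < ε) :
    ∃ t : I, (t : ℝ) < ε ∧ dist (g t : HilbertCube) k < ε := by
  rw [← hg, mem_iInter₂] at hk
  obtain ⟨_, ⟨t, ht, rfl⟩, hd⟩ := Metric.mem_closure_iff.1 (hk ε hε) ε hε
  exact ⟨t, ht, by rwa [dist_comm]⟩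

namespace SpiralSet

variable {K : Set HilbertCube} {g e f : I → K}

def graphMap (g : I → K) (t : I) : SpiralSet K g :=
  ⟨((t : ℝ), (g t : HilbertCube)), Or.inl ⟨t, rfl⟩⟩

def remMap (g : I → K) (k : K) : SpiralSet K g :=
  ⟨((0 : ℝ), (k : HilbertCube)), Or.inr ⟨rfl, k.2⟩⟩

theorem subset_Icc_prod : SpiralSet K g ⊆ Icc 0 1 ×ˢ K := by
  rintro _ (⟨t, rfl⟩ | ⟨h0, hk⟩)
  · exact ⟨⟨t.2.1.le, t.2.2⟩, (g t).2⟩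
  · rw [mem_singleton_iff] at h0
    exact ⟨⟨h0.ge, h0 ▸ zero_le_one⟩, hk⟩

def proj (x : SpiralSet K g) : K :=
  ⟨(x : ℝ × HilbertCube).2, (subset_Icc_prod x.2).2⟩

@[simp] theorem proj_graphMap (t : I) : proj (graphMap g t) = g t := rfl

@[simp] theorem proj_remMap (k : K) : proj (remMap g k) = k := rfl

theorem continuous_graphMap (hg : Continuous g) : Continuous (graphMap g) := by
  unfold graphMap
  fun_prop

theorem continuous_remMap : Continuous (remMap g) := by
  unfold remMap
  fun_prop

theorem continuous_proj : Continuous (proj (g := g)) := by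
  unfold proj
  fun_prop

theorem range_graphMap :
    range (graphMap g) = {x : SpiralSet K g | 0 < (x : ℝ × HilbertCube).1} := by
  ext ⟨p, hp⟩
  refine ⟨?_, fun hpos ↦ ?_⟩
  · rintro ⟨t, ht⟩
    rw [← ht]
    exact t.2.1
  · change 0 < p.1 at hpos
    rcases hp with ⟨t, rfl⟩ | ⟨h0, -⟩
    · exact ⟨t, rfl⟩
    · exact absurd h0 hpos.ne'

theorem range_remMap : range (remMap g) = (range (graphMap g))ᶜ := by
  ext ⟨p, hp⟩
  rw [range_graphMap]
  refine ⟨?_, fun hx ↦ ?_⟩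
  · rintro ⟨k, hk⟩
    rw [← hk]
    exact lt_irrefl (0 : ℝ)
  · change ¬ 0 < p.1 at hx
    rcases hp with ⟨t, rfl⟩ | ⟨h0, hk⟩
    · exact absurd t.2.1 hx
    · exact ⟨⟨p.2, hk⟩, Subtype.ext (Prod.ext h0.symm rfl)⟩

theorem remMap_notMem_range_graphMap (k : K) : remMap g k ∉ range (graphMap g) := by
  rw [← mem_compl_iff, ← range_remMap]
  exact ⟨k, rfl⟩

theorem eq_graphMap_of_fst_eq {x : SpiralSet K g} {t : I}
    (h : (x : ℝ × HilbertCube).1 = t) : x = graphMap g t := by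
  obtain ⟨s, rfl⟩ : x ∈ range (graphMap g) := by
    rw [range_graphMap, mem_ofPred_eq, h]
    exact t.2.1
  exact congrArg _ (Subtype.ext h)

theorem isOpenEmbedding_graphMap (hg : Continuous g) : IsOpenEmbedding (graphMap g) where
  toIsInducing := IsInducing.of_comp (continuous_graphMap hg)
    (continuous_fst.comp continuous_subtype_val) IsInducing.subtypeVal
  injective _ _ hst :=
    Subtype.ext (congrArg (fun x : SpiralSet K g ↦ (x : ℝ × HilbertCube).1) hst)
  isOpen_range := by
    rw [range_graphMap]
    exact isOpen_lt continuous_const (continuous_fst.comp continuous_subtype_val)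

theorem isEmbedding_remMap : IsEmbedding (remMap g) where
  toIsInducing := IsInducing.of_comp continuous_remMap continuous_proj IsInducing.id
  injective := Function.LeftInverse.injective (g := proj) fun _ ↦ rfl

theorem isClosed (hK : IsClosed K) (hg : Continuous g) : IsClosed (SpiralSet K g) := by
  set γ : I → ℝ × HilbertCube := fun t ↦ ((t : ℝ), (g t : HilbertCube))
  have hγ : Continuous γ := by fun_prop
  suffices closure (range γ) ⊆ SpiralSet K g by
    refine isClosed_of_closure_subset ?_
    rw [SpiralSet, closure_union, (isClosed_singleton.prod hK).closure_eq]
    exact union_subset this subset_union_right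
  intro p hp
  have hpIK : p ∈ Icc 0 1 ×ˢ K :=
    closure_minimal (subset_union_left.trans subset_Icc_prod) (isClosed_Icc.prod hK) hp
  rcases hpIK.1.1.eq_or_lt with h0 | hpos
  · exact Or.inr ⟨h0.symm, hpIK.2⟩
  set τ : I := ⟨p.1, hpos, hpIK.1.2⟩
  set l := comap γ (𝓝 p)
  have : l.NeBot := comap_neBot_iff_frequently.2 (mem_closure_iff_frequently.1 hp)
  have hτ : Tendsto id l (𝓝 τ) :=
    tendsto_subtype_rng.2 ((continuous_fst.tendsto p).comp tendsto_comap)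
  have hpτ : p = γ τ :=
    tendsto_nhds_unique (f := γ) (l := l) tendsto_comap ((hγ.tendsto τ).comp hτ)
  exact Or.inl ⟨τ, hpτ.symm⟩

theorem isCompact (hK : IsCompact K) (hg : Continuous g) : IsCompact (SpiralSet K g) :=
  (isCompact_Icc.prod hK).of_isClosed_subset (isClosed hK.isClosed hg) subset_Icc_prod

theorem connectedImKleinenAt_graphMap (hg : Continuous g) (t : I) :
    ConnectedImKleinenAt (graphMap g t) :=
  have := (convex_Ioc (0 : ℝ) 1).locallyPathConnectedSpace
  (connectedImKleinenAt t).map (isOpenEmbedding_graphMap hg)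

theorem graphMap_mem_of_isPreconnected {C : Set (SpiralSet K g)} (hC : IsPreconnected C)
    {k : K} (hk : remMap g k ∈ C) {s t : I} (ht : graphMap g t ∈ C) (hst : s ≤ t) :
    graphMap g s ∈ C := by
  have hfst : IsPreconnected ((fun x : SpiralSet K g ↦ (x : ℝ × HilbertCube).1) '' C) :=
    hC.image _ (continuous_fst.comp continuous_subtype_val).continuousOn
  obtain ⟨x, hx, hxs⟩ := hfst.Icc_subset ⟨_, hk, rfl⟩ ⟨_, ht, rfl⟩ ⟨s.2.1.le, hst⟩
  rwa [← eq_graphMap_of_fst_eq hxs]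

theorem not_connectedImKleinenAt_remMap (hK : K.Nontrivial) (hg : Compactifying K g)
    (k : K) : ¬ ConnectedImKleinenAt (remMap g k) := by
  intro hk
  obtain ⟨k', hk'K, hkk'⟩ := hK.exists_ne (k : HilbertCube)
  set δ := dist (k : HilbertCube) k' / 2
  have hδ : 0 < δ := half_pos (dist_pos.2 hkk'.symm)
  obtain ⟨V, hV, hVU, hVc⟩ := hk (proj ⁻¹' Metric.ball k δ)
    (continuous_proj.continuousAt.preimage_mem_nhds (Metric.ball_mem_nhds k hδ))
  obtain ⟨r, hr, hrV⟩ := Metric.mem_nhds_iff.1 hV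
  obtain ⟨t, htr, hgt⟩ := hg.exists_lt_dist_lt k.2 hr
  have htV : graphMap g t ∈ V := hrV <| by
    change max (dist (t : ℝ) 0) (dist (g t : HilbertCube) k) < r
    rw [Real.dist_0_eq_abs, abs_of_pos t.2.1]
    exact max_lt htr hgt
  obtain ⟨s, hst, hgs⟩ := hg.exists_lt_dist_lt hk'K (lt_min t.2.1 hδ)
  have hsV := hVU (graphMap_mem_of_isPreconnected hVc (mem_of_mem_nhds hV) htV
    (hst.trans_le (min_le_left _ _)).le)
  refine lt_irrefl (dist (k : HilbertCube) k') ?_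
  calc dist (k : HilbertCube) k'
      ≤ dist (g s : HilbertCube) k + dist (g s : HilbertCube) k' := dist_triangle_left _ _ _
    _ < δ + δ := add_lt_add hsV (hgs.trans_le (min_le_right _ _))
    _ = dist (k : HilbertCube) k' := add_halves _

theorem connectedImKleinenAt_iff (hK : K.Nontrivial) (hg : Continuous g)
    (hcg : Compactifying K g) {x : SpiralSet K g} :
    ConnectedImKleinenAt x ↔ x ∈ range (graphMap g) := by
  refine ⟨fun hx ↦ ?_, fun ⟨t, ht⟩ ↦ ht ▸ connectedImKleinenAt_graphMap hg t⟩
  by_contra hx'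
  rw [← mem_compl_iff, ← range_remMap] at hx'
  obtain ⟨k, rfl⟩ := hx'
  exact not_connectedImKleinenAt_remMap hK hcg k hx

theorem image_range_graphMap (hK : K.Nontrivial) (he : Continuous e) (hf : Continuous f)
    (hce : Compactifying K e) (hcf : Compactifying K f)
    (h : SpiralSet K e ≃ₜ SpiralSet K f) : h '' range (graphMap e) = range (graphMap f) := by
  ext y
  rw [h.image_eq_preimage_symm, mem_preimage, ← connectedImKleinenAt_iff hK he hce,
    ← connectedImKleinenAt_iff hK hf hcf, ← h.connectedImKleinenAt_apply_iff,
    h.apply_symm_apply]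

theorem exists_tendsto_dist_of_homeomorph (hK : IsCompact K) (hKnt : K.Nontrivial)
    (he : Continuous e) (hf : Continuous f) (hce : Compactifying K e)
    (hcf : Compactifying K f) (h : SpiralSet K e ≃ₜ SpiralSet K f) :
    ∃ (α : K ≃ₜ K) (β : I ≃ₜ I),
      Tendsto (fun t ↦ dist (α (e t)) (f (β t))) (cocompact I) (𝓝 0) := by
  have hgraph := image_range_graphMap hKnt he hf hce hcf h
  have hrem : h '' range (remMap e) = range (remMap f) := by
    rw [range_remMap, range_remMap, h.image_compl, hgraph]
  set β := h.ofImageRangeEq (isOpenEmbedding_graphMap he).isEmbedding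
    (isOpenEmbedding_graphMap hf).isEmbedding hgraph
  set α := h.ofImageRangeEq isEmbedding_remMap isEmbedding_remMap hrem
  have hβ (t : I) : graphMap f (β t) = h (graphMap e t) := h.apply_ofImageRangeEq ..
  have hα (k : K) : remMap f (α k) = h (remMap e k) := h.apply_ofImageRangeEq ..
  refine ⟨α, β, ?_⟩
  set D : SpiralSet K e → ℝ := fun x ↦ dist (α (proj x)) (proj (h x))
  have hD : Continuous D :=
    (α.continuous.comp continuous_proj).dist (continuous_proj.comp h.continuous)
  have hD0 : MapsTo D (range (graphMap e))ᶜ {0} := by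
    rw [← range_remMap]
    rintro _ ⟨k, rfl⟩
    simp [D, ← hα]
  have hDγ : D ∘ graphMap e = fun t ↦ dist (α (e t)) (f (β t)) := by
    ext t
    simp [D, ← hβ]
  have := isCompact_iff_compactSpace.1 (isCompact hK he)
  rw [← hDγ, ← nhdsSet_singleton]
  exact (hD.tendsto_nhdsSet hD0).comp
    (isOpenEmbedding_graphMap he).tendsto_cocompact_nhdsSet_compl_range

theorem tendsto_graphMap_nhds_remMap {ι : Type*} {l : Filter ι} {u : ι → I} {k : K}
    (hu : Tendsto (fun i ↦ (u i : ℝ)) l (𝓝 0)) (hgu : Tendsto (g ∘ u) l (𝓝 k)) :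
    Tendsto (graphMap g ∘ u) l (𝓝 (remMap g k)) :=
  tendsto_subtype_rng.2 (hu.prodMk_nhds ((continuous_subtype_val.tendsto k).comp hgu))

noncomputable def map (f : I → K) (a : K → K) (b : I → I) (x : SpiralSet K e) :
    SpiralSet K f :=
  if hx : 0 < (x : ℝ × HilbertCube).1 then
    graphMap f (b ⟨_, hx, (subset_Icc_prod x.2).1.2⟩)
  else remMap f (a (proj x))

@[simp] theorem map_graphMap (a : K → K) (b : I → I) (t : I) :
    map f a b (graphMap e t) = graphMap f (b t) :=
  dif_pos t.2.1

@[simp] theorem map_remMap (a : K → K) (b : I → I) (k : K) :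
    map f a b (remMap e k) = remMap f (a k) :=
  dif_neg (lt_irrefl 0)

theorem leftInverse_map {a a' : K → K} {b b' : I → I} (ha : Function.LeftInverse a' a)
    (hb : Function.LeftInverse b' b) : Function.LeftInverse (map e a' b') (map f a b) := by
  intro x
  by_cases hx : x ∈ range (graphMap e)
  · obtain ⟨t, rfl⟩ := hx
    simp [hb t]
  · rw [← mem_compl_iff, ← range_remMap] at hx
    obtain ⟨k, rfl⟩ := hx
    simp [ha k]

theorem continuous_map {a : K → K} {b : I → I} (he : Continuous e) (hf : Continuous f)
    (ha : Continuous a) (hb : Continuous b) (hb0 : Tendsto b (cocompact I) (cocompact I))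
    (hab : Tendsto (fun t ↦ dist (a (e t)) (f (b t))) (cocompact I) (𝓝 0)) :
    Continuous (map f a b : SpiralSet K e → SpiralSet K f) := by
  have hmap_graph : map f a b ∘ graphMap e = graphMap f ∘ b := funext (map_graphMap a b)
  have hmap_rem : map f a b ∘ remMap e = remMap f ∘ a := funext (map_remMap a b)
  rw [continuous_iff_continuousAt]
  intro x
  by_cases hx : x ∈ range (graphMap e)
  · obtain ⟨t, rfl⟩ := hx
    rw [← (isOpenEmbedding_graphMap he).continuousAt_iff, hmap_graph]
    exact ((continuous_graphMap hf).comp hb).continuousAt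
  rw [← mem_compl_iff, ← range_remMap] at hx
  obtain ⟨k, rfl⟩ := hx
  have hnhds : 𝓝 (remMap e k) =
      𝓝[range (graphMap e)] remMap e k ⊔ 𝓝[range (remMap e)] remMap e k := by
    rw [← nhdsWithin_union, range_remMap, union_compl_self, nhdsWithin_univ]
  rw [ContinuousAt, map_remMap, hnhds, tendsto_sup, nhdsWithin, ← map_comap,
    tendsto_map'_iff, ← isEmbedding_remMap.isInducing.map_nhds_eq, tendsto_map'_iff,
    hmap_graph, hmap_rem]
  refine ⟨?_, (continuous_remMap.comp ha).tendsto k⟩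
  set L := comap (graphMap e) (𝓝 (remMap e k))
  have hL : L ≤ cocompact I :=
    comap_nhds_le_cocompact (continuous_graphMap he) (remMap_notMem_range_graphMap k)
  have hval : Tendsto ((↑) : I → ℝ) (cocompact I) (𝓝 0) := by
    rw [← comap_coe_nhdsGT_eq_cocompact]
    exact tendsto_comap.mono_right nhdsWithin_le_nhds
  have hek : Tendsto e L (𝓝 k) := (continuous_proj.tendsto _).comp tendsto_comap
  exact tendsto_graphMap_nhds_remMap (hval.comp (hb0.mono_left hL))
    (((ha.tendsto k).comp hek).congr_dist (hab.mono_left hL))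

theorem nonempty_homeomorph_of_tendsto (hK : IsCompact K) (he : Continuous e)
    (hf : Continuous f) (α : K ≃ₜ K) (β : I ≃ₜ I)
    (hαβ : Tendsto (fun t ↦ dist (α (e t)) (f (β t))) (cocompact I) (𝓝 0)) :
    Nonempty (SpiralSet K e ≃ₜ SpiralSet K f) :=
  have := isCompact_iff_compactSpace.1 (isCompact hK he)
  have hcont := continuous_map he hf α.continuous β.continuous β.map_cocompact.le hαβ
  ⟨hcont.homeoOfEquivCompactToT2 (f := ⟨map f α β, map e α.symm β.symm,
    leftInverse_map α.left_inv β.left_inv, leftInverse_map α.right_inv β.right_inv⟩)⟩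

end SpiralSet

theorem stmt_13_general (K : Set HilbertCube) (hKcomp : IsCompact K)
    (hKnd : K.Nontrivial)
    (e f : Set.Ioc (0:ℝ) 1 → K) (he : Continuous e) (hf : Continuous f)
    (hce : Compactifying K e) (hcf : Compactifying K f) :
    Nonempty (↥(SpiralSet K e) ≃ₜ ↥(SpiralSet K f)) ↔
      ∃ (α : ↥K ≃ₜ ↥K) (β : ↥(Set.Ioc (0:ℝ) 1) ≃ₜ ↥(Set.Ioc (0:ℝ) 1)),
        Tendsto (fun t : Set.Ioc (0:ℝ) 1 =>
            dist ((α (e t) : HilbertCube)) ((f (β t) : HilbertCube)))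
          (Filter.comap (Subtype.val : Set.Ioc (0:ℝ) 1 → ℝ) (nhdsWithin 0 (Set.Ioi 0)))
          (nhds 0) := by
  rw [comap_coe_nhdsGT_eq_cocompact]
  exact ⟨fun ⟨h⟩ ↦ SpiralSet.exists_tendsto_dist_of_homeomorph hKcomp hKnd he hf hce hcf h,
    fun ⟨α, β, hαβ⟩ ↦ SpiralSet.nonempty_homeomorph_of_tendsto hKcomp he hf α β hαβ⟩

/-- Let `K` be a nondegenerate continuum in the Hilbert cube and `e, f : (0,1] → K`
continuous compactifying maps. Then `S_e ≃ S_f` iff there are homeomorphisms `α` of `K`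
and `β` of `(0,1]` such that `dist (α (e t), f (β t)) → 0` as `t → 0⁺`. -/
theorem stmt_13 (K : Set HilbertCube) (hKcomp : IsCompact K) (hKconn : IsConnected K)
    (hKnd : K.Nontrivial)
    (e f : Set.Ioc (0:ℝ) 1 → K) (he : Continuous e) (hf : Continuous f)
    (hce : Compactifying K e) (hcf : Compactifying K f) :
    Nonempty (↥(SpiralSet K e) ≃ₜ ↥(SpiralSet K f)) ↔
      ∃ (α : ↥K ≃ₜ ↥K) (β : ↥(Set.Ioc (0:ℝ) 1) ≃ₜ ↥(Set.Ioc (0:ℝ) 1)),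
        Tendsto (fun t : Set.Ioc (0:ℝ) 1 =>
            dist ((α (e t) : HilbertCube)) ((f (β t) : HilbertCube)))
          (Filter.comap (Subtype.val : Set.Ioc (0:ℝ) 1 → ℝ) (nhdsWithin 0 (Set.Ioi 0)))
          (nhds 0) :=
  stmt_13_general K hKcomp hKnd e f he hf hce hcf
end

section
/- In a compactification S_g = graph(g) ∪ ({0} × K) of the ray (0,1] with nondegenerate continuum remainder K, the graph of g is the unique dense arc-component of S_g; consequently every homeomorphism h : S_e → S_f maps graph(e) onto graph(f) and {0} × K onto {0} × K. -/
open TopologicalSpace Set Filter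

/-- The graph of `g` as a subset of `ℝ × Q`. -/
def GraphSet (K : Set HilbertCube) (g : Set.Ioc (0:ℝ) 1 → K) : Set (ℝ × HilbertCube) :=
  Set.range fun t : Set.Ioc (0:ℝ) 1 => ((t : ℝ), (g t : HilbertCube))

/-! The graph of `g` is a continuous image of the ray `(0,1]`, hence path connected, and it is
dense because `g` is compactifying. No path runs from the graph into `{0} × K`: just before the
first time `T` at which it meets `{0} × K`, such a path stays in the graph and, by the
intermediate value theorem, passes through `(s, g s)` for every small `s > 0`. Since `K` lies in
the closure of these `g s`, continuity at `T` squeezes `K` into every ball around a single point,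
contradicting nondegeneracy. So the graph is an arc-component, every other arc-component lies in
the closed proper subset `{0} × K`, and a homeomorphism, which carries dense arc-components to
dense arc-components, preserves the graph. -/

section

variable {K : Set HilbertCube} {g : Set.Ioc (0:ℝ) 1 → K}

lemma graphSet_subset_spiralSet : GraphSet K g ⊆ SpiralSet K g := subset_union_left

lemma fst_pos_of_mem_graphSet {z : ℝ × HilbertCube} (hz : z ∈ GraphSet K g) : 0 < z.1 := by
  obtain ⟨t, rfl⟩ := hz
  exact t.2.1

lemma mem_prod_iff_notMem_graphSet {z : ℝ × HilbertCube} (hz : z ∈ SpiralSet K g) :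
    z ∈ ({0} ×ˢ K : Set (ℝ × HilbertCube)) ↔ z ∉ GraphSet K g := by
  refine ⟨fun ⟨h0, _⟩ hG => (fst_pos_of_mem_graphSet hG).ne' h0, fun hG => ?_⟩
  exact hz.resolve_left hG

lemma fst_eq_zero_of_notMem_graphSet {z : ℝ × HilbertCube} (hz : z ∈ SpiralSet K g)
    (hG : z ∉ GraphSet K g) : z.1 = 0 :=
  ((mem_prod_iff_notMem_graphSet hz).mpr hG).1

lemma fst_nonneg_of_mem_spiralSet {z : ℝ × HilbertCube} (hz : z ∈ SpiralSet K g) :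
    0 ≤ z.1 := by
  by_cases hG : z ∈ GraphSet K g
  · exact (fst_pos_of_mem_graphSet hG).le
  · exact (fst_eq_zero_of_notMem_graphSet hz hG).ge

lemma snd_eq_of_mem_spiralSet {z : ℝ × HilbertCube} (hz : z ∈ SpiralSet K g)
    {s : Set.Ioc (0:ℝ) 1} (hs : z.1 = s) : z.2 = g s := by
  rcases hz with ⟨t, rfl⟩ | ⟨h0, -⟩
  · obtain rfl : t = s := Subtype.ext hs
    rfl
  · exact absurd (hs.symm.trans h0) s.2.1.ne'

lemma Compactifying.subset_closure_image (hcg : Compactifying K g) {a : ℝ} (ha : 0 < a) :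
    K ⊆ closure ((fun t : Set.Ioc (0:ℝ) 1 => (g t : HilbertCube)) '' {t | (t : ℝ) < a}) :=
  fun _ hk => mem_iInter₂.mp (hcg.ge hk) a ha

lemma dense_graphSet (hcg : Compactifying K g) :
    Dense {x : SpiralSet K g | (x : ℝ × HilbertCube) ∈ GraphSet K g} := by
  rw [Subtype.dense_iff, show Subtype.val '' {x : SpiralSet K g | _} = GraphSet K g from
    (Subtype.image_preimage_coe _ _).trans (inter_eq_right.mpr graphSet_subset_spiralSet)]
  intro z hz
  rcases hz with hG | ⟨h0, hK⟩
  · exact subset_closure hG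
  rw [Metric.mem_closure_iff]
  intro ε hε
  obtain ⟨_, ⟨s, hs, rfl⟩, hsz⟩ :=
    Metric.mem_closure_iff.mp (hcg.subset_closure_image hε hK) ε hε
  refine ⟨((s : ℝ), (g s : HilbertCube)), ⟨s, rfl⟩, max_lt ?_ hsz⟩
  rw [mem_singleton_iff.mp h0, dist_comm, Real.dist_0_eq_abs, abs_of_pos s.2.1]
  exact hs

lemma subset_closure_snd_image_Icc (hcg : Compactifying K g) {Γ : ℝ → ℝ × HilbertCube}
    (hΓ : Continuous Γ) (hΓS : ∀ u, Γ u ∈ SpiralSet K g) {t₀ T : ℝ} (hle : t₀ ≤ T)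
    (h₀ : 0 < (Γ t₀).1) (hT : (Γ T).1 = 0) :
    K ⊆ closure ((fun u => (Γ u).2) '' Icc t₀ T) := by
  refine (hcg.subset_closure_image h₀).trans (closure_mono ?_)
  rintro _ ⟨s, hs, rfl⟩
  obtain ⟨u, hu, hus⟩ : (s : ℝ) ∈ (fun u => (Γ u).1) '' Icc t₀ T :=
    intermediate_value_Icc' hle (continuous_fst.comp hΓ).continuousOn
      ⟨hT.le.trans s.2.1.le, hs.le⟩
  exact ⟨u, hu, snd_eq_of_mem_spiralSet (hΓS u) hus⟩

lemma subsingleton_of_curve_reaching_remainder (hcg : Compactifying K g)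
    {Γ : ℝ → ℝ × HilbertCube} (hΓ : Continuous Γ) (hΓS : ∀ u, Γ u ∈ SpiralSet K g) {T : ℝ}
    (hT : (Γ T).1 = 0) (hpos : ∀ u < T, 0 < (Γ u).1) : K.Subsingleton := by
  suffices h : ∀ k ∈ K, k = (Γ T).2 from fun k hk k' hk' => (h k hk).trans (h k' hk').symm
  intro k hk
  refine eq_of_forall_dist_le fun ε hε => ?_
  obtain ⟨δ, hδ, hball⟩ :=
    Metric.continuousAt_iff.mp ((continuous_snd.comp hΓ).continuousAt (x := T)) ε hε
  have hsub : (fun u => (Γ u).2) '' Icc (T - δ / 2) T ⊆ Metric.closedBall (Γ T).2 ε := by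
    rintro _ ⟨u, hu, rfl⟩
    refine (hball ?_).le
    rw [Real.dist_eq, abs_of_nonpos (by linarith [hu.2])]
    linarith [hu.1]
  exact Metric.isClosed_closedBall.closure_subset_iff.mpr hsub
    (subset_closure_snd_image_Icc hcg hΓ hΓS (by linarith) (hpos _ (by linarith)) hT hk)

lemma not_joined_of_mem_graphSet (hKnd : K.Nontrivial) (hcg : Compactifying K g)
    {x y : SpiralSet K g} (hx : (x : ℝ × HilbertCube) ∈ GraphSet K g)
    (hy : (y : ℝ × HilbertCube).1 = 0) : ¬ Joined x y := by
  rintro ⟨γ⟩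
  set Γ : ℝ → ℝ × HilbertCube := fun u => (γ.extend u : ℝ × HilbertCube)
  have hΓ : Continuous Γ := continuous_subtype_val.comp γ.continuous_extend
  set Z : Set ℝ := {u | (Γ u).1 = 0}
  have hZ : IsClosed Z := isClosed_eq (continuous_fst.comp hΓ) continuous_const
  have hZne : Z.Nonempty := ⟨1, by simpa [Z, Γ] using hy⟩
  have hZpos : ∀ u ∈ Z, 0 < u := by
    intro u hu
    by_contra! hu0
    have : Γ u = x := by simp [Γ, γ.extend_of_le_zero hu0]
    exact (fst_pos_of_mem_graphSet hx).ne' (this ▸ hu)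
  have hZbdd : BddBelow Z := ⟨0, fun u hu => (hZpos u hu).le⟩
  refine hKnd.not_subsingleton (subsingleton_of_curve_reaching_remainder hcg hΓ
    (fun u => (γ.extend u).2) (hZ.csInf_mem hZne hZbdd) fun u hu => ?_)
  exact (fst_nonneg_of_mem_spiralSet (γ.extend u).2).lt_of_ne'
    fun h => notMem_of_lt_csInf hu hZbdd h

lemma isPathConnected_graphSet (hg : Continuous g) :
    IsPathConnected {x : SpiralSet K g | (x : ℝ × HilbertCube) ∈ GraphSet K g} := by
  have : PathConnectedSpace (Ioc (0:ℝ) 1) := isPathConnected_iff_pathConnectedSpace.mp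
    ((convex_Ioc 0 1).isPathConnected (nonempty_Ioc.mpr zero_lt_one))
  exact (isPathConnected_range (continuous_subtype_val.prodMk
    (continuous_subtype_val.comp hg))).preimage_coe graphSet_subset_spiralSet

lemma pathComponent_eq_graphSet (hg : Continuous g) (hKnd : K.Nontrivial)
    (hcg : Compactifying K g) {x : SpiralSet K g} (hx : (x : ℝ × HilbertCube) ∈ GraphSet K g) :
    pathComponent x = {y : SpiralSet K g | (y : ℝ × HilbertCube) ∈ GraphSet K g} := by
  refine Subset.antisymm (fun y hxy => ?_)
    ((isPathConnected_graphSet hg).subset_pathComponent hx)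
  by_contra hy
  exact not_joined_of_mem_graphSet hKnd hcg hx (fst_eq_zero_of_notMem_graphSet y.2 hy) hxy

lemma mem_graphSet_of_dense_pathComponent (hKnd : K.Nontrivial) (hcg : Compactifying K g)
    {x : SpiralSet K g} (hd : Dense (pathComponent x)) :
    (x : ℝ × HilbertCube) ∈ GraphSet K g := by
  by_contra hx
  set R : Set (SpiralSet K g) := {y | (y : ℝ × HilbertCube).1 = 0}
  have hR : IsClosed R :=
    isClosed_eq (continuous_fst.comp continuous_subtype_val) continuous_const
  have hsub : pathComponent x ⊆ R := fun y hxy => by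
    by_contra hy
    have hyG : (y : ℝ × HilbertCube) ∈ GraphSet K g := by_contra fun hG =>
      hy (fst_eq_zero_of_notMem_graphSet y.2 hG)
    exact not_joined_of_mem_graphSet hKnd hcg hyG (fst_eq_zero_of_notMem_graphSet x.2 hx)
      hxy.symm
  let one : Set.Ioc (0:ℝ) 1 := ⟨1, by norm_num⟩
  have hone : (⟨((1:ℝ), (g one : HilbertCube)), Or.inl ⟨one, rfl⟩⟩ : SpiralSet K g) ∈ R :=
    hR.closure_subset_iff.mpr hsub (hd _)
  exact one_ne_zero hone

lemma pathComponent_eq_graphSet_of_dense (hg : Continuous g) (hKnd : K.Nontrivial)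
    (hcg : Compactifying K g) {x : SpiralSet K g} (hd : Dense (pathComponent x)) :
    pathComponent x = {y : SpiralSet K g | (y : ℝ × HilbertCube) ∈ GraphSet K g} :=
  pathComponent_eq_graphSet hg hKnd hcg (mem_graphSet_of_dense_pathComponent hKnd hcg hd)

lemma Homeomorph.dense_pathComponent_apply {X Y : Type*} [TopologicalSpace X]
    [TopologicalSpace Y] (h : X ≃ₜ Y) {x : X} (hd : Dense (pathComponent x)) :
    Dense (pathComponent (h x)) :=
  (h.surjective.denseRange.dense_image h.continuous hd).mono <| by
    rintro _ ⟨y, hxy, rfl⟩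
    exact hxy.map h.continuous

lemma Homeomorph.mem_graphSet_apply {g' : Set.Ioc (0:ℝ) 1 → K} (hg : Continuous g)
    (hKnd : K.Nontrivial) (hcg : Compactifying K g) (hcg' : Compactifying K g')
    (h : SpiralSet K g ≃ₜ SpiralSet K g') {x : SpiralSet K g}
    (hx : (x : ℝ × HilbertCube) ∈ GraphSet K g) : (h x : ℝ × HilbertCube) ∈ GraphSet K g' := by
  have hd : Dense (pathComponent x) :=
    pathComponent_eq_graphSet hg hKnd hcg hx ▸ dense_graphSet hcg
  exact mem_graphSet_of_dense_pathComponent hKnd hcg' (h.dense_pathComponent_apply hd)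

end

theorem stmt_15_general (K : Set HilbertCube)
    (hKnd : K.Nontrivial)
    (e f : Set.Ioc (0:ℝ) 1 → K) (he : Continuous e) (hf : Continuous f)
    (hce : Compactifying K e) (hcf : Compactifying K f) :
    -- the graph of `e` is dense in `S_e`
    Dense {x : ↥(SpiralSet K e) | (x : ℝ × HilbertCube) ∈ GraphSet K e} ∧
    -- the graph of `e` is an arc-component of `S_e`
    (∀ x : ↥(SpiralSet K e), (x : ℝ × HilbertCube) ∈ GraphSet K e →
      pathComponent x = {y : ↥(SpiralSet K e) | (y : ℝ × HilbertCube) ∈ GraphSet K e}) ∧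
    -- it is the unique dense arc-component of `S_e`
    (∀ x : ↥(SpiralSet K e), Dense (pathComponent x) →
      pathComponent x = {y : ↥(SpiralSet K e) | (y : ℝ × HilbertCube) ∈ GraphSet K e}) ∧
    -- consequently every homeomorphism `S_e ≃ₜ S_f` preserves graph and remainder
    (∀ h : ↥(SpiralSet K e) ≃ₜ ↥(SpiralSet K f),
      (∀ x : ↥(SpiralSet K e),
        ((x : ℝ × HilbertCube) ∈ GraphSet K e ↔ (h x : ℝ × HilbertCube) ∈ GraphSet K f)) ∧
      (∀ x : ↥(SpiralSet K e),
        ((x : ℝ × HilbertCube) ∈ ({0} ×ˢ K : Set (ℝ × HilbertCube)) ↔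
          (h x : ℝ × HilbertCube) ∈ ({0} ×ˢ K : Set (ℝ × HilbertCube))))) := by
  refine ⟨dense_graphSet hce, fun x => pathComponent_eq_graphSet he hKnd hce,
    fun x => pathComponent_eq_graphSet_of_dense he hKnd hce, fun h => ?_⟩
  have hgraph : ∀ x : SpiralSet K e,
      (x : ℝ × HilbertCube) ∈ GraphSet K e ↔ (h x : ℝ × HilbertCube) ∈ GraphSet K f := fun x =>
    ⟨h.mem_graphSet_apply he hKnd hce hcf, fun hx => by
      simpa using h.symm.mem_graphSet_apply hf hKnd hcf hce hx⟩
  refine ⟨hgraph, fun x => ?_⟩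
  rw [mem_prod_iff_notMem_graphSet x.2, mem_prod_iff_notMem_graphSet (h x).2, hgraph]

/-- In a compactification `S_g = graph(g) ∪ ({0} × K)` of the ray `(0,1]` with
nondegenerate continuum remainder `K`, the graph of `g` is the unique dense
arc-component (= path component, as these coincide in compact metrizable spaces);
consequently any homeomorphism `h : S_e → S_f` maps `graph(e)` onto `graph(f)` and
`{0} × K` onto `{0} × K`. -/
theorem stmt_15 (K : Set HilbertCube) (hKcomp : IsCompact K) (hKconn : IsConnected K)
    (hKnd : K.Nontrivial)
    (e f : Set.Ioc (0:ℝ) 1 → K) (he : Continuous e) (hf : Continuous f)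
    (hce : Compactifying K e) (hcf : Compactifying K f) :
    -- the graph of `e` is dense in `S_e`
    Dense {x : ↥(SpiralSet K e) | (x : ℝ × HilbertCube) ∈ GraphSet K e} ∧
    -- the graph of `e` is an arc-component of `S_e`
    (∀ x : ↥(SpiralSet K e), (x : ℝ × HilbertCube) ∈ GraphSet K e →
      pathComponent x = {y : ↥(SpiralSet K e) | (y : ℝ × HilbertCube) ∈ GraphSet K e}) ∧
    -- it is the unique dense arc-component of `S_e`
    (∀ x : ↥(SpiralSet K e), Dense (pathComponent x) →
      pathComponent x = {y : ↥(SpiralSet K e) | (y : ℝ × HilbertCube) ∈ GraphSet K e}) ∧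
    -- consequently every homeomorphism `S_e ≃ₜ S_f` preserves graph and remainder
    (∀ h : ↥(SpiralSet K e) ≃ₜ ↥(SpiralSet K f),
      (∀ x : ↥(SpiralSet K e),
        ((x : ℝ × HilbertCube) ∈ GraphSet K e ↔ (h x : ℝ × HilbertCube) ∈ GraphSet K f)) ∧
      (∀ x : ↥(SpiralSet K e),
        ((x : ℝ × HilbertCube) ∈ ({0} ×ˢ K : Set (ℝ × HilbertCube)) ↔
          (h x : ℝ × HilbertCube) ∈ ({0} ×ˢ K : Set (ℝ × HilbertCube))))) :=
  stmt_15_general K hKnd e f he hf hce hcf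
end
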